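/- arXiv:2203.01848 — 2 statements merged into one kernel-verified Lean document; each statement's English description precedes it below -/
import Mathlib

section
/- (Characterization of the DMGs satisfying the LCD constraints without selection bias.) Let G be a directed mixed graph on node set exactly {C, X, Y} such that no node other than C is an ancestor of C (i.e., an(C) = {C}). Then C ⊥ Y | {X} and C ⊥̸ Y | ∅ hold in G if and only if the edges of G satisfy all of the following: the directed edge X → Y is present; the directed edge Y → X is absent; the bidirected edge X ↔ Y is absent; there is no edge of any type between C and Y; and at least one of the edges C → X, C ↔ X is present. -/
/-- The three ways an edge of a directed mixed graph can occur on a walk,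
when traversed from left to right: `fwd` is a directed edge pointing to the
right node, `bwd` is a directed edge pointing to the left node, and `bi` is
a bidirected edge. -/
inductive EdgeDir : Type
  | fwd
  | bwd
  | bi
  deriving DecidableEq

/-- The edge has an arrowhead at its right endpoint. -/
def EdgeDir.headAtRight (e : EdgeDir) : Prop := e = .fwd ∨ e = .bi

/-- The edge has an arrowhead at its left endpoint. -/
def EdgeDir.headAtLeft (e : EdgeDir) : Prop := e = .bwd ∨ e = .bi

/-- A directed mixed graph (DMG) on node type `α`: an irreflexive relation of
directed edges and an irreflexive symmetric relation of bidirected edges. -/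
structure DMG (α : Type*) where
  dir : α → α → Prop
  bidir : α → α → Prop
  dir_irrefl : ∀ x, ¬ dir x x
  bidir_irrefl : ∀ x, ¬ bidir x x
  bidir_symm : ∀ x y, bidir x y → bidir y x

namespace DMG

variable {α : Type*}

/-- `G.Anc x y`: there is a directed path (possibly of length zero) from `x` to `y`,
i.e. `x` is an ancestor of `y` (equivalently, `y` is a descendant of `x`). -/
def Anc (G : DMG α) (x y : α) : Prop := Relation.ReflTransGen G.dir x y

/-- Ancestors of a set of nodes. -/
def ancSet (G : DMG α) (S : Set α) : Set α := {x | ∃ y ∈ S, G.Anc x y}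

/-- The strongly connected component of `x`: all nodes that are both ancestors
and descendants of `x`. -/
def scc (G : DMG α) (x : α) : Set α := {y | G.Anc y x ∧ G.Anc x y}

/-- Validity of one step of a walk, from `a` to `b`, traversed as `e`. -/
def StepValid (G : DMG α) (a : α) (e : EdgeDir) (b : α) : Prop :=
  match e with
  | .fwd => G.dir a b
  | .bwd => G.dir b a
  | .bi => G.bidir a b

/-- A walk from `x` to `y` in a DMG `G`: an alternating sequence of `n + 1` nodes
and `n` edges of `G`. -/
structure Walk (G : DMG α) (x y : α) where
  n : ℕ
  node : Fin (n + 1) → α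
  edge : Fin n → EdgeDir
  first_eq : node 0 = x
  last_eq : node (Fin.last n) = y
  valid : ∀ i : Fin n, G.StepValid (node i.castSucc) (edge i) (node i.succ)

namespace Walk

variable {G : DMG α} {x y : α}

/-- A path is a walk all of whose nodes are distinct. -/
def IsPath (w : Walk G x y) : Prop := Function.Injective w.node

/-- The interior node at position `i + 1` of the walk is a collider: both
adjacent edges have an arrowhead at it. -/
def IsColliderAt (w : Walk G x y) (i : ℕ) (h : i + 1 < w.n) : Prop :=
  (w.edge ⟨i, by omega⟩).headAtRight ∧ (w.edge ⟨i + 1, h⟩).headAtLeft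

/-- The walk is σ-blocked by the conditioning set `C`. -/
def Blocked (w : Walk G x y) (C : Set α) : Prop :=
  x ∈ C ∨ y ∈ C ∨
  (∃ (i : ℕ) (h : i + 1 < w.n), w.IsColliderAt i h ∧
    w.node ⟨i + 1, by omega⟩ ∉ G.ancSet C) ∨
  (∃ (i : ℕ) (h : i + 1 < w.n), ¬ w.IsColliderAt i h ∧
    w.node ⟨i + 1, by omega⟩ ∈ C ∧
    ((w.edge ⟨i, by omega⟩ = .bwd ∧
        w.node ⟨i, by omega⟩ ∉ G.scc (w.node ⟨i + 1, by omega⟩)) ∨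
     (w.edge ⟨i + 1, h⟩ = .fwd ∧
        w.node ⟨i + 2, by omega⟩ ∉ G.scc (w.node ⟨i + 1, by omega⟩))))

end Walk

/-- σ-separation: every path between `x` and `y` is σ-blocked by `C`. -/
def sigmaSep (G : DMG α) (x y : α) (C : Set α) : Prop :=
  ∀ w : Walk G x y, w.IsPath → w.Blocked C

/-- A confounding path between `x` and `y`: a path of nonzero length whose first
edge has an arrowhead at `x`, whose last edge has an arrowhead at `y`, and all of
whose non-endpoint nodes are non-colliders. -/
def IsConfoundingPath {G : DMG α} {x y : α} (w : Walk G x y) : Prop :=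
  w.IsPath ∧ ∃ h : 0 < w.n,
    (w.edge ⟨0, h⟩).headAtLeft ∧ (w.edge ⟨w.n - 1, by omega⟩).headAtRight ∧
    ∀ (i : ℕ) (hi : i + 1 < w.n), ¬ w.IsColliderAt i hi

/-- `x` and `y` are confounded in `G` if some confounding path connects them. -/
def Confounded (G : DMG α) (x y : α) : Prop := ∃ w : Walk G x y, IsConfoundingPath w

/-- A directed path from `x` to `y` (of length at least one) all of whose
intermediate nodes avoid `M`. -/
def DirPathAvoiding (G : DMG α) (M : Set α) (x y : α) : Prop :=
  ∃ l : List α, List.Chain G.dir x (l ++ [y]) ∧ ∀ v ∈ l, v ∉ M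

/-- A path between `x` and `y` with an arrowhead at `x` and an arrowhead at `y`,
all of whose intermediate nodes lie outside `M` and are non-colliders. -/
def BidirPathAvoiding (G : DMG α) (M : Set α) (x y : α) : Prop :=
  ∃ w : Walk G x y, w.IsPath ∧ (∃ h : 0 < w.n,
    (w.edge ⟨0, h⟩).headAtLeft ∧ (w.edge ⟨w.n - 1, by omega⟩).headAtRight) ∧
    ∀ (i : ℕ) (hi : i + 1 < w.n),
      w.node ⟨i + 1, by omega⟩ ∉ M ∧ ¬ w.IsColliderAt i hi

/-- The latent projection of `G` onto the node set `M`. -/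
def latentProj (G : DMG α) (M : Set α) : DMG M where
  dir a b := a.1 ≠ b.1 ∧ DirPathAvoiding G M a.1 b.1
  bidir a b := a.1 ≠ b.1 ∧
    (BidirPathAvoiding G M a.1 b.1 ∨ BidirPathAvoiding G M b.1 a.1)
  dir_irrefl := fun _a h => h.1 rfl
  bidir_irrefl := fun _a h => h.1 rfl
  bidir_symm := fun _a _b h => ⟨Ne.symm h.1, Or.symm h.2⟩

end DMG

/-- The node set `{C, X, Y}`. -/
inductive N3 : Type
  | C | X | Y
  deriving DecidableEq

instance : Fintype N3 :=
  ⟨⟨{N3.C, N3.X, N3.Y}, by decide⟩, fun x => by cases x <;> decide⟩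

open N3 in
/-- Auxiliary: a walk of length one. -/
def DMG.mkWalk1 (G : DMG N3) (x y : N3) (e : EdgeDir) (h : G.StepValid x e y) :
    G.Walk x y where
  n := 1
  node := ![x, y]
  edge := ![e]
  first_eq := rfl
  last_eq := rfl
  valid := by intro i; fin_cases i; exact h

open N3 in
/-- Auxiliary: a walk of length two. -/
def DMG.mkWalk2 (G : DMG N3) (x m y : N3) (e0 e1 : EdgeDir)
    (h0 : G.StepValid x e0 m) (h1 : G.StepValid m e1 y) : G.Walk x y where
  n := 2
  node := ![x, m, y]
  edge := ![e0, e1]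
  first_eq := rfl
  last_eq := rfl
  valid := by intro i; fin_cases i; exacts [h0, h1]

open N3 in
/-- characterization of the DMGs on node set `{C, X, Y}` that
satisfy the LCD constraints without selection bias. -/
theorem lcd_characterization (G : DMG N3)
    (hroot : ∀ v : N3, G.Anc v C → v = C) :
    (G.sigmaSep C Y {X} ∧ ¬ G.sigmaSep C Y ∅) ↔
      (G.dir X Y ∧ ¬ G.dir Y X ∧ ¬ G.bidir X Y ∧
       ¬ G.dir C Y ∧ ¬ G.dir Y C ∧ ¬ G.bidir C Y ∧
       (G.dir C X ∨ G.bidir C X)) := by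
  have hXC : ¬ G.dir X C := fun h =>
    N3.noConfusion (hroot X (Relation.ReflTransGen.single h))
  have hYC : ¬ G.dir Y C := fun h =>
    N3.noConfusion (hroot Y (Relation.ReflTransGen.single h))
  have hpath1 : Function.Injective ![C, Y] := by decide
  have hpath2 : Function.Injective ![C, X, Y] := by decide
  constructor
  · rintro ⟨hsep, hcon⟩
    -- Step 1: there is no edge of any type between C and Y.
    have hedgeCY : ∀ e : EdgeDir, ¬ G.StepValid C e Y := by
      intro e he
      have hb := hsep (G.mkWalk1 C Y e he) hpath1
      rcases hb with h | h | ⟨i, hi, _⟩ | ⟨i, hi, _⟩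
      · simp at h
      · simp at h
      · have hn : i + 1 < 1 := hi; omega
      · have hn : i + 1 < 1 := hi; omega
    have hnCY : ¬ G.dir C Y := hedgeCY .fwd
    have hnYC : ¬ G.dir Y C := hYC
    have hnbCY : ¬ G.bidir C Y := hedgeCY .bi
    -- Step 2: analyze the σ-connecting path given ∅.
    rw [DMG.sigmaSep] at hcon
    push_neg at hcon
    obtain ⟨w, hp, hnb⟩ := hcon
    obtain ⟨n, node, edge, hf, hl, hv⟩ := w
    have hp' : Function.Injective node := hp
    have hle : n ≤ 2 := by
      have hc := Fintype.card_le_of_injective node hp'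
      simp only [Fintype.card_fin] at hc
      have h3 : Fintype.card N3 = 3 := rfl
      omega
    interval_cases n
    · exact absurd (hf.symm.trans hl) (by decide)
    · exfalso
      have hs : G.StepValid (node 0) (edge 0) (node 1) := hv 0
      rw [hf, show node 1 = Y from hl] at hs
      exact hedgeCY _ hs
    · -- length-two path: middle node is X
      have hmid : node 1 = X := by
        rcases h : node 1 with _ | _ | _
        · exact absurd (hp' (h.trans hf.symm)) (by decide)
        · rfl
        · exact absurd (hp' (h.trans (show node 2 = Y from hl).symm)) (by decide)
      have hs0 : G.StepValid (node 0) (edge 0) (node 1) := hv 0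
      have hs1 : G.StepValid (node 1) (edge 1) (node 2) := hv 1
      rw [hf, hmid] at hs0
      rw [hmid, show node 2 = Y from hl] at hs1
      -- the middle node is a non-collider (else blocked by ∅)
      have hnc : ¬ (EdgeDir.headAtRight (edge 0) ∧ EdgeDir.headAtLeft (edge 1)) := by
        intro hcol
        apply hnb
        refine Or.inr (Or.inr (Or.inl ⟨0, show 0 + 1 < 2 by omega, hcol, ?_⟩))
        show node 1 ∉ G.ancSet ∅
        simp [DMG.ancSet]
      have hR : EdgeDir.headAtRight (edge 0) := by
        rcases h : edge 0 with _ | _ | _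
        · exact Or.inl rfl
        · exfalso; rw [h] at hs0; exact hXC hs0
        · exact Or.inr rfl
      have he1 : edge 1 = .fwd := by
        rcases h : edge 1 with _ | _ | _
        · rfl
        · exact absurd ⟨hR, by rw [h]; exact Or.inl rfl⟩ hnc
        · exact absurd ⟨hR, by rw [h]; exact Or.inr rfl⟩ hnc
      have hXY : G.dir X Y := by rw [he1] at hs1; exact hs1
      have hCX : G.dir C X ∨ G.bidir C X := by
        rcases h : edge 0 with _ | _ | _
        · left; rw [h] at hs0; exact hs0
        · exfalso; rw [h] at hs0; exact hXC hs0
        · right; rw [h] at hs0; exact hs0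
      -- a first edge of the connecting length-two path, not pointing back
      obtain ⟨e0', hse0, hne0, hhr0⟩ :
          ∃ e, G.StepValid C e X ∧ e ≠ .bwd ∧ e.headAtRight := by
        rcases hCX with h | h
        · exact ⟨.fwd, h, by decide, Or.inl rfl⟩
        · exact ⟨.bi, h, by decide, Or.inr rfl⟩
      -- Step 3: Y → X is absent
      have hnYX : ¬ G.dir Y X := by
        intro hYX
        have hb := hsep (G.mkWalk2 C X Y e0' .fwd hse0 hXY) hpath2
        rcases hb with h | h | ⟨i, hi, hcol, _⟩ | ⟨i, hi, hncol, hmem, hor⟩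
        · simp at h
        · simp at h
        · obtain rfl : i = 0 := by have : i + 1 < 2 := hi; omega
          have h2 : EdgeDir.headAtLeft .fwd := hcol.2
          rcases h2 with h2 | h2 <;> exact EdgeDir.noConfusion h2
        · obtain rfl : i = 0 := by have : i + 1 < 2 := hi; omega
          rcases hor with ⟨hb1, _⟩ | ⟨_, hsc⟩
          · exact hne0 hb1
          · exact hsc ⟨Relation.ReflTransGen.single hYX,
              Relation.ReflTransGen.single hXY⟩
      -- Step 4: X ↔ Y is absent
      have hnbXY : ¬ G.bidir X Y := by
        intro hbXY
        have hb := hsep (G.mkWalk2 C X Y e0' .bi hse0 hbXY) hpath2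
        rcases hb with h | h | ⟨i, hi, hcol, hna⟩ | ⟨i, hi, hncol, hmem, hor⟩
        · simp at h
        · simp at h
        · obtain rfl : i = 0 := by have : i + 1 < 2 := hi; omega
          exact hna ⟨X, rfl, Relation.ReflTransGen.refl⟩
        · obtain rfl : i = 0 := by have : i + 1 < 2 := hi; omega
          exact hncol ⟨hhr0, Or.inr rfl⟩
      exact ⟨hXY, hnYX, hnbXY, hnCY, hnYC, hnbCY, hCX⟩
  · rintro ⟨hXY, hnYX, hnbXY, hnCY, hnYC, hnbCY, hCX⟩
    have hancYX : ¬ G.Anc Y X := by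
      intro h
      rcases Relation.ReflTransGen.cases_head h with h | ⟨c, hc, _⟩
      · exact N3.noConfusion h
      · cases c
        · exact hYC hc
        · exact hnYX hc
        · exact G.dir_irrefl Y hc
    constructor
    · -- σ-separation given {X}
      intro w hp
      obtain ⟨n, node, edge, hf, hl, hv⟩ := w
      have hp' : Function.Injective node := hp
      have hle : n ≤ 2 := by
        have hc := Fintype.card_le_of_injective node hp'
        simp only [Fintype.card_fin] at hc
        have h3 : Fintype.card N3 = 3 := rfl
        omega
      interval_cases n
      · exact absurd (hf.symm.trans hl) (by decide)
      · exfalso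
        have hs : G.StepValid (node 0) (edge 0) (node 1) := hv 0
        rw [hf, show node 1 = Y from hl] at hs
        rcases h : edge 0 with _ | _ | _ <;> rw [h] at hs
        · exact hnCY hs
        · exact hnYC hs
        · exact hnbCY hs
      · have hmid : node 1 = X := by
          rcases h : node 1 with _ | _ | _
          · exact absurd (hp' (h.trans hf.symm)) (by decide)
          · rfl
          · exact absurd (hp' (h.trans (show node 2 = Y from hl).symm)) (by decide)
        have hs0 : G.StepValid (node 0) (edge 0) (node 1) := hv 0
        have hs1 : G.StepValid (node 1) (edge 1) (node 2) := hv 1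
        rw [hf, hmid] at hs0
        rw [hmid, show node 2 = Y from hl] at hs1
        have he1 : edge 1 = .fwd := by
          rcases h : edge 1 with _ | _ | _
          · rfl
          · rw [h] at hs1; exact absurd hs1 hnYX
          · rw [h] at hs1; exact absurd hs1 hnbXY
        refine Or.inr (Or.inr (Or.inr
          ⟨0, show 0 + 1 < 2 by omega, ?_, ?_, Or.inr ⟨?_, ?_⟩⟩))
        · intro hcol
          have h2 : EdgeDir.headAtLeft (edge 1) := hcol.2
          rw [he1] at h2
          rcases h2 with h2 | h2 <;> exact EdgeDir.noConfusion h2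
        · exact hmid
        · exact he1
        · show node 2 ∉ G.scc (node 1)
          rw [hmid, show node 2 = Y from hl]
          intro h
          exact hancYX h.1
    · -- σ-connection given ∅
      intro hsep
      obtain ⟨e0, hse0, hhr⟩ : ∃ e, G.StepValid C e X ∧ e.headAtRight := by
        rcases hCX with h | h
        · exact ⟨.fwd, h, Or.inl rfl⟩
        · exact ⟨.bi, h, Or.inr rfl⟩
      have hb := hsep (G.mkWalk2 C X Y e0 .fwd hse0 hXY) hpath2
      rcases hb with h | h | ⟨i, hi, hcol, _⟩ | ⟨i, hi, _, hmem, _⟩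
      · exact h
      · exact h
      · obtain rfl : i = 0 := by have : i + 1 < 2 := hi; omega
        have h2 : EdgeDir.headAtLeft .fwd := hcol.2
        rcases h2 with h2 | h2 <;> exact EdgeDir.noConfusion h2
      · exact hmem
end

section
/- (Edge orientations at X under the Extended Y-Structure conditions.) Let G be a directed mixed graph whose node set is exactly {V, W, X, Y} ∪ 𝐒, where V, W, X, Y are four distinct nodes and 𝐒 is a (possibly empty) set of selection nodes disjoint from {V, W, X, Y}. Suppose the following σ-separation statements hold in G: V ⊥ Y | {X} ∪ 𝐒, V ⊥̸ Y | 𝐒, V ⊥̸ W | {X} ∪ 𝐒, and V ⊥ W | 𝐒. Then X ∉ an({V, W} ∪ 𝐒), every edge of G between X and a node of {V, W} ∪ 𝐒 has an arrowhead at X (it is a directed edge into X or a bidirected edge), the directed edge Y → X is not in G, and the bidirected edge X ↔ Y is not in G. -/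
/-! Since `V ⊥ W | S` but `V ⊥̸ W | {X} ∪ S`, a path between `V` and `W` that is open given
`{X} ∪ S` is blocked given `S` at a collider that is an ancestor of `X` but not of `S`. So `X` is
not an ancestor of `S`; nor of `W` (resp. `V`), for otherwise rerouting from the first (resp. last)
such collider down a directed path to `W` (resp. `V`) would give a path open given `S`.

Dually, a path between `V` and `Y` that is open given `S` is blocked given `{X} ∪ S` at `X` as a
non-collider with an edge out of the strongly connected component of `X`. As `X` has no child in
`{V, W} ∪ S`, that edge is the last one, `X → Y`, with `Y` not an ancestor of `X`; replacing it by
`X ↔ Y` would turn `X` into a collider and the path into one open given `{X} ∪ S`. -/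

namespace EdgeDir

def reverse : EdgeDir → EdgeDir
  | fwd => bwd
  | bwd => fwd
  | bi => bi

end EdgeDir

namespace DMG

variable {α : Type*} {G : DMG α} {C : Set α} {x y : α}

lemma stepValid_reverse {a b : α} {e : EdgeDir} :
    G.StepValid b e.reverse a ↔ G.StepValid a e b := by
  cases e
  · exact Iff.rfl
  · exact Iff.rfl
  · exact ⟨G.bidir_symm b a, G.bidir_symm a b⟩

/-- The σ-blocking condition at the middle node `b` of a stretch `a —e— b —f— c` of a walk. -/
def Blocks (G : DMG α) (C : Set α) (a : α) (e : EdgeDir) (b : α) (f : EdgeDir) (c : α) : Prop :=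
  (e.headAtRight ∧ f.headAtLeft) ∧ b ∉ G.ancSet C ∨
  ¬(e.headAtRight ∧ f.headAtLeft) ∧ b ∈ C ∧
    (e = .bwd ∧ a ∉ G.scc b ∨ f = .fwd ∧ c ∉ G.scc b)

lemma blocks_reverse {a b c : α} {e f : EdgeDir} :
    G.Blocks C c f.reverse b e.reverse a ↔ G.Blocks C a e b f c := by
  cases e <;> cases f <;>
    simp [Blocks, EdgeDir.reverse, EdgeDir.headAtRight, EdgeDir.headAtLeft, or_comm]

lemma not_blocks_of_fwd {a b c : α} {e : EdgeDir} (hb : b ∉ C) :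
    ¬ G.Blocks C a e b .fwd c := by
  simp [Blocks, EdgeDir.headAtLeft, hb]

lemma not_blocks_of_collider {a b c : α} {e f : EdgeDir} (he : e.headAtRight)
    (hf : f.headAtLeft) (hb : b ∈ C) : ¬ G.Blocks C a e b f c := by
  rintro (⟨_, hanc⟩ | ⟨hnc, _⟩)
  · exact hanc ⟨b, hb, .refl⟩
  · exact hnc ⟨he, hf⟩

/-- `node 0, …, node n` are the distinct nodes of a path from `x` to `y` in `G`, joined by the
edges `edge 0, …, edge (n - 1)`. -/
structure IsPathSeq (G : DMG α) (x y : α) (n : ℕ) (node : ℕ → α) (edge : ℕ → EdgeDir) :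
    Prop where
  node_zero : node 0 = x
  node_last : node n = y
  valid : ∀ i < n, G.StepValid (node i) (edge i) (node (i + 1))
  injOn : Set.InjOn node (Set.Iic n)

structure IsOpenPathSeq (G : DMG α) (C : Set α) (x y : α) (n : ℕ) (node : ℕ → α)
    (edge : ℕ → EdgeDir) : Prop extends G.IsPathSeq x y n node edge where
  left_not_mem : x ∉ C
  right_not_mem : y ∉ C
  not_blocks : ∀ i, i + 1 < n →
    ¬ G.Blocks C (node i) (edge i) (node (i + 1)) (edge (i + 1)) (node (i + 2))

variable {n : ℕ} {node : ℕ → α} {edge : ℕ → EdgeDir}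

namespace Walk

def nodeSeq (w : G.Walk x y) (k : ℕ) : α := w.node (Fin.clamp k w.n)

def edgeSeq (w : G.Walk x y) (k : ℕ) : EdgeDir := if h : k < w.n then w.edge ⟨k, h⟩ else .bi

lemma nodeSeq_eq (w : G.Walk x y) {k : ℕ} (hk : k < w.n + 1) : w.nodeSeq k = w.node ⟨k, hk⟩ :=
  congrArg w.node (Fin.ext (Nat.min_eq_left (by omega)))

lemma edgeSeq_eq (w : G.Walk x y) {k : ℕ} (hk : k < w.n) : w.edgeSeq k = w.edge ⟨k, hk⟩ :=
  dif_pos hk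

lemma isOpenPathSeq (w : G.Walk x y) (hw : w.IsPath) (hb : ¬ w.Blocked C) :
    G.IsOpenPathSeq C x y w.n w.nodeSeq w.edgeSeq where
  node_zero := (w.nodeSeq_eq (by omega)).trans w.first_eq
  node_last := (w.nodeSeq_eq (by omega)).trans w.last_eq
  valid i hi := by
    rw [w.nodeSeq_eq (by omega), w.nodeSeq_eq (by omega), w.edgeSeq_eq hi]
    exact w.valid ⟨i, hi⟩
  injOn a ha b hb h := by
    have := congrArg Fin.val (hw h)
    simpa [Fin.clamp, Nat.min_eq_left (Set.mem_Iic.mp ha),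
      Nat.min_eq_left (Set.mem_Iic.mp hb)] using this
  left_not_mem h := hb (Or.inl h)
  right_not_mem h := hb (Or.inr (Or.inl h))
  not_blocks i hi h := by
    rw [w.nodeSeq_eq (by omega), w.nodeSeq_eq (by omega), w.nodeSeq_eq (by omega),
      w.edgeSeq_eq (by omega), w.edgeSeq_eq hi] at h
    exact hb (Or.inr (Or.inr (h.imp (fun hc => ⟨i, hi, hc⟩) (fun hn => ⟨i, hi, hn⟩))))

end Walk

def IsPathSeq.toWalk (hp : G.IsPathSeq x y n node edge) : G.Walk x y :=
  ⟨n, fun k => node k, fun i => edge i, hp.node_zero, hp.node_last, fun i => hp.valid i i.2⟩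

theorem not_sigmaSep_iff :
    ¬ G.sigmaSep x y C ↔ ∃ n node edge, G.IsOpenPathSeq C x y n node edge := by
  constructor
  · intro h
    simp only [sigmaSep, not_forall] at h
    obtain ⟨w, hw, hb⟩ := h
    exact ⟨_, _, _, w.isOpenPathSeq hw hb⟩
  · rintro ⟨n, node, edge, hp⟩ hsep
    have hpath : hp.toWalk.IsPath := fun a b h =>
      Fin.ext (hp.injOn (Nat.lt_succ_iff.mp a.2) (Nat.lt_succ_iff.mp b.2) h)
    rcases hsep _ hpath with hx | hy | ⟨i, hi, hc⟩ | ⟨i, hi, hn⟩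
    · exact hp.left_not_mem hx
    · exact hp.right_not_mem hy
    · exact hp.not_blocks i hi (Or.inl hc)
    · exact hp.not_blocks i hi (Or.inr hn)

lemma IsOpenPathSeq.reverse (hp : G.IsOpenPathSeq C x y n node edge) :
    G.IsOpenPathSeq C y x n (fun k => node (n - k)) (fun k => (edge (n - 1 - k)).reverse) where
  node_zero := by simpa using hp.node_last
  node_last := by simpa using hp.node_zero
  valid i hi := by
    obtain ⟨j, rfl⟩ : ∃ j, n = j + i + 1 := ⟨n - i - 1, by omega⟩
    simpa [show j + i + 1 - i = j + 1 by omega, show j + i + 1 - (i + 1) = j by omega,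
      show j + i + 1 - 1 - i = j by omega] using stepValid_reverse.mpr (hp.valid j (by omega))
  injOn a ha b hb h := by
    have := hp.injOn (Set.mem_Iic.mpr (Nat.sub_le n a)) (Set.mem_Iic.mpr (Nat.sub_le n b)) h
    have := Set.mem_Iic.mp ha
    have := Set.mem_Iic.mp hb
    omega
  left_not_mem := hp.right_not_mem
  right_not_mem := hp.left_not_mem
  not_blocks i hi h := by
    obtain ⟨j, rfl⟩ : ∃ j, n = j + i + 2 := ⟨n - i - 2, by omega⟩
    refine hp.not_blocks j (by omega) (blocks_reverse.mp ?_)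
    simpa [show j + i + 2 - i = j + 2 by omega, show j + i + 2 - (i + 1) = j + 1 by omega,
      show j + i + 2 - (i + 2) = j by omega, show j + i + 2 - 1 - i = j + 1 by omega,
      show j + i + 2 - 1 - (i + 1) = j by omega, show j + i + 1 - i = j + 1 by omega] using h

lemma sigmaSep.symm (h : G.sigmaSep x y C) : G.sigmaSep y x C := by
  contrapose! h
  obtain ⟨n, node, edge, hp⟩ := not_sigmaSep_iff.mp h
  exact not_sigmaSep_iff.mpr ⟨_, _, _, hp.reverse⟩

lemma exists_dir_seq {a b : α} (h : G.Anc a b) :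
    ∃ m, ∃ t : ℕ → α, t 0 = a ∧ t m = b ∧ ∀ i < m, G.dir (t i) (t (i + 1)) := by
  induction h with
  | refl => exact ⟨0, fun _ => a, rfl, rfl, fun i hi => absurd hi (Nat.not_lt_zero i)⟩
  | @tail b c _ hbc ih =>
    obtain ⟨m, t, h0, hm, ht⟩ := ih
    refine ⟨m + 1, fun i => if i ≤ m then t i else c, by simpa using h0, by simp, fun i hi => ?_⟩
    rcases Nat.lt_or_ge i m with hi' | hi'
    · simpa [hi'.le, Nat.succ_le_of_lt hi'] using ht i hi'
    · simpa [show i = m by omega, hm] using hbc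

/-- A shortest directed walk is a path. -/
lemma exists_isPathSeq_fwd {a b : α} (h : G.Anc a b) :
    ∃ m t, G.IsPathSeq a b m t fun _ => .fwd := by
  classical
  have hex := exists_dir_seq h
  obtain ⟨t, h0, hm, ht⟩ := Nat.find_spec hex
  have hmin := fun k => Nat.find_min (m := k) hex
  set m := Nat.find hex
  refine ⟨m, t, h0, hm, ht, fun i hi j hj hij => ?_⟩
  by_contra hne
  wlog hlt : i < j generalizing i j
  · exact this j hj i hi hij.symm (Ne.symm hne) (by omega)
  have hj : j ≤ m := hj
  refine hmin (m - (j - i)) (by omega)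
    ⟨fun k => if k ≤ i then t k else t (k + (j - i)), by simpa using h0, ?_, fun k hk => ?_⟩
  · by_cases hjm : j = m
    · subst hjm
      simpa [show m - (m - i) = i by omega, hij] using hm
    · simpa [show ¬ m - (j - i) ≤ i by omega, show m - (j - i) + (j - i) = m by omega] using hm
  · rcases lt_trichotomy k i with hki | rfl | hki
    · simpa [hki.le, Nat.succ_le_of_lt hki] using ht k (by omega)
    · simpa [hij, show k + 1 + (j - k) = j + 1 by omega] using ht j (by omega)
    · simpa [show ¬ k ≤ i by omega, show ¬ k + 1 ≤ i by omega,
        show k + 1 + (j - i) = k + (j - i) + 1 by omega] using ht (k + (j - i)) (by omega)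

lemma IsPathSeq.anc_of_le {t : ℕ → α} {a b : α} {m : ℕ} (ht : G.IsPathSeq a b m t fun _ => .fwd)
    {i j : ℕ} (hij : i ≤ j) (hj : j ≤ m) : G.Anc (t i) (t j) := by
  induction j, hij using Nat.le_induction with
  | base => exact .refl
  | succ j _ ih => exact (ih (by omega)).tail (ht.valid j (by omega))

def spliceSeq {β : Type*} (j : ℕ) (f g : ℕ → β) (i : ℕ) : β := if i < j then f i else g (i - j)

lemma spliceSeq_of_lt {β : Type*} {j i : ℕ} (f g : ℕ → β) (hi : i < j) :
    spliceSeq j f g i = f i := if_pos hi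

lemma spliceSeq_of_ge {β : Type*} {j i : ℕ} (f g : ℕ → β) (hi : j ≤ i) :
    spliceSeq j f g i = g (i - j) := if_neg (by omega)

lemma spliceSeq_of_le {β : Type*} {j i : ℕ} {f g : ℕ → β} (hg : g 0 = f j) (hi : i ≤ j) :
    spliceSeq j f g i = f i := by
  rcases hi.lt_or_eq with hi | rfl
  · exact spliceSeq_of_lt f g hi
  · rw [spliceSeq_of_ge f g le_rfl, Nat.sub_self, hg]

lemma IsPathSeq.splice (hp : G.IsPathSeq x y n node edge) {j : ℕ} (hj : j ≤ n) {z : α} {m : ℕ}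
    {node' : ℕ → α} {edge' : ℕ → EdgeDir} (ht : G.IsPathSeq (node j) z m node' edge')
    (hdisj : ∀ a < j, ∀ b ≤ m, node a ≠ node' b) :
    G.IsPathSeq x z (j + m) (spliceSeq j node node') (spliceSeq j edge edge') where
  node_zero := (spliceSeq_of_le ht.node_zero (Nat.zero_le j)).trans hp.node_zero
  node_last := by rw [spliceSeq_of_ge _ _ (by omega), Nat.add_sub_cancel_left, ht.node_last]
  valid i hi := by
    by_cases hij : i < j
    · rw [spliceSeq_of_le ht.node_zero hij.le, spliceSeq_of_le ht.node_zero hij,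
        spliceSeq_of_lt _ _ hij]
      exact hp.valid i (by omega)
    · rw [spliceSeq_of_ge _ _ (by omega), spliceSeq_of_ge _ _ (by omega),
        spliceSeq_of_ge _ _ (by omega), show i + 1 - j = i - j + 1 by omega]
      exact ht.valid (i - j) (by omega)
  injOn a ha b hb h := by
    have ha : a ≤ j + m := ha
    have hb : b ≤ j + m := hb
    simp only [spliceSeq] at h
    split_ifs at h with hja hjb hjb
    · exact hp.injOn (Set.mem_Iic.mpr (by omega)) (Set.mem_Iic.mpr (by omega)) h
    · exact absurd h (hdisj a hja (b - j) (by omega))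
    · exact absurd h.symm (hdisj b hjb (a - j) (by omega))
    · have := ht.injOn (Set.mem_Iic.mpr (by omega)) (Set.mem_Iic.mpr (by omega)) h
      omega

/-- Follow the path up to the first node on a directed route from `node k` to `y`, then go down
that route: the new nodes are descendants of `node k`, hence outside `C`, and none is a collider. -/
theorem not_sigmaSep_of_open_prefix (hp : G.IsPathSeq x y n node edge) (hx : x ∉ C) {k : ℕ}
    (hkn : k ≤ n)
    (hopen : ∀ i, i + 1 < k →
      ¬ G.Blocks C (node i) (edge i) (node (i + 1)) (edge (i + 1)) (node (i + 2)))
    (hkC : node k ∉ G.ancSet C) (hky : G.Anc (node k) y) : ¬ G.sigmaSep x y C := by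
  classical
  have hex : ∃ j, G.Anc (node k) (node j) ∧ G.Anc (node j) y := ⟨k, .refl, hky⟩
  obtain ⟨hkj, hjy⟩ := Nat.find_spec hex
  have hmin := fun a => Nat.find_min (m := a) hex
  have hjk : Nat.find hex ≤ k := Nat.find_min' hex ⟨.refl, hky⟩
  set j := Nat.find hex
  obtain ⟨m, t, ht⟩ := exists_isPathSeq_fwd hjy
  have hdesc : ∀ b ≤ m, G.Anc (node k) (t b) := fun b hb =>
    hkj.trans (ht.node_zero ▸ ht.anc_of_le (Nat.zero_le b) hb)
  have hanc : ∀ b ≤ m, G.Anc (t b) y := fun b hb => ht.node_last ▸ ht.anc_of_le hb le_rfl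
  have hsplice := hp.splice (hjk.trans hkn) ht fun a ha b hb hab =>
    hmin a ha ⟨hab ▸ hdesc b hb, hab ▸ hanc b hb⟩
  refine not_sigmaSep_iff.mpr ⟨_, _, _, hsplice, hx, fun hy => hkC ⟨y, hy, hky⟩,
    fun i hi => ?_⟩
  by_cases hij : i + 1 < j
  · rw [spliceSeq_of_le (i := i) ht.node_zero (by omega),
      spliceSeq_of_le (i := i + 1) ht.node_zero (by omega),
      spliceSeq_of_le (i := i + 2) ht.node_zero (by omega), spliceSeq_of_lt (i := i) _ _ (by omega),
      spliceSeq_of_lt _ _ hij]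
    exact hopen i (by omega)
  · rw [spliceSeq_of_ge (i := i + 1) edge _ (by omega),
      spliceSeq_of_ge (i := i + 1) node _ (by omega)]
    exact not_blocks_of_fwd fun h => hkC ⟨_, h, hdesc _ (by omega)⟩

section AddNode

variable {X a b c : α} {e f : EdgeDir}

lemma blocks_of_blocks_union_singleton (h : G.Blocks ({X} ∪ C) a e b f c) (hb : b ≠ X) :
    G.Blocks C a e b f c := by
  rcases h with ⟨hcol, hanc⟩ | ⟨hnc, hmem, hdir⟩
  · exact Or.inl ⟨hcol, fun ⟨d, hd, hbd⟩ => hanc ⟨d, Or.inr hd, hbd⟩⟩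
  · exact Or.inr ⟨hnc, hmem.resolve_left hb, hdir⟩

lemma anc_of_blocks_of_not_blocks_union_singleton (h : G.Blocks C a e b f c)
    (h' : ¬ G.Blocks ({X} ∪ C) a e b f c) : G.Anc b X ∧ b ∉ G.ancSet C := by
  rcases h with ⟨hcol, hanc⟩ | ⟨hnc, hmem, hdir⟩
  · by_contra hbX
    refine h' (Or.inl ⟨hcol, fun ⟨d, hd, hbd⟩ => ?_⟩)
    rcases hd with rfl | hd
    · exact hbX ⟨hbd, hanc⟩
    · exact hanc ⟨d, hd, hbd⟩
  · exact absurd (Or.inr ⟨hnc, Or.inr hmem, hdir⟩) h'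

lemma eq_of_blocks_union_singleton_of_not_blocks (h : G.Blocks ({X} ∪ C) a e b f c)
    (h' : ¬ G.Blocks C a e b f c) :
    b = X ∧ (e = .bwd ∧ a ∉ G.scc b ∨ f = .fwd ∧ c ∉ G.scc b) := by
  by_cases hb : b = X
  · rcases h with ⟨_, hanc⟩ | ⟨_, _, hdir⟩
    · exact absurd ⟨X, Or.inl rfl, hb ▸ .refl⟩ hanc
    · exact ⟨hb, hdir⟩
  · exact absurd (blocks_of_blocks_union_singleton h hb) h'

end AddNode

theorem not_mem_ancSet_insert_of_open_of_sigmaSep {X : α}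
    (hp : G.IsOpenPathSeq ({X} ∪ C) x y n node edge) (hsep : G.sigmaSep x y C) :
    X ∉ G.ancSet (insert y C) := by
  classical
  have hx : x ∉ C := fun h => hp.left_not_mem (Or.inr h)
  have hy : y ∉ C := fun h => hp.right_not_mem (Or.inr h)
  have hblock : ∃ i, i + 1 < n ∧
      G.Blocks C (node i) (edge i) (node (i + 1)) (edge (i + 1)) (node (i + 2)) := by
    by_contra! hopen
    exact not_sigmaSep_iff.mpr ⟨n, node, edge, hp.toIsPathSeq, hx, hy, hopen⟩ hsep
  obtain ⟨hk, hkC⟩ := Nat.find_spec hblock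
  obtain ⟨hcX, hcC⟩ := anc_of_blocks_of_not_blocks_union_singleton hkC (hp.not_blocks _ hk)
  rintro ⟨z, rfl | hz, hXz⟩
  · exact not_sigmaSep_of_open_prefix hp.toIsPathSeq hx (k := Nat.find hblock + 1) (by omega)
      (fun i hi hb => Nat.find_min hblock (m := i) (by omega) ⟨by omega, hb⟩) hcC
      (hcX.trans hXz) hsep
  · exact hcC ⟨z, hz, hcX.trans hXz⟩

lemma IsPathSeq.eq_of_node_eq_last (hp : G.IsPathSeq x y n node edge) {l : ℕ} (hl : l ≤ n)
    (h : node l = y) : l = n :=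
  hp.injOn (Set.mem_Iic.mpr hl) (Set.mem_Iic.mpr le_rfl) (h.trans hp.node_last.symm)

theorem exists_penultimate_of_open_of_sigmaSep_union {X : α}
    (hq : G.IsOpenPathSeq C x y n node edge) (hsep : G.sigmaSep x y ({X} ∪ C)) (hxX : x ≠ X)
    (hyX : y ≠ X) (hout : ∀ z, G.dir X z → z = y) :
    ∃ i, i + 2 = n ∧ node (i + 1) = X ∧ (edge i).headAtRight ∧ ¬ G.Anc y X := by
  have hblock : ∃ i, i + 1 < n ∧ G.Blocks ({X} ∪ C) (node i) (edge i) (node (i + 1))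
      (edge (i + 1)) (node (i + 2)) := by
    by_contra! hopen
    refine not_sigmaSep_iff.mpr ⟨n, node, edge, hq.toIsPathSeq, ?_, ?_, hopen⟩ hsep
    · exact fun h => h.elim hxX hq.left_not_mem
    · exact fun h => h.elim hyX hq.right_not_mem
  obtain ⟨i, hi, hb⟩ := hblock
  obtain ⟨hX, hdir⟩ := eq_of_blocks_union_singleton_of_not_blocks hb (hq.not_blocks i hi)
  have hleft : edge i ≠ .bwd := fun h => by
    have hXi : G.dir X (node i) := by simpa [h, hX, StepValid] using hq.valid i (by omega)
    have := hq.eq_of_node_eq_last (by omega) (hout _ hXi)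
    omega
  rcases hdir with ⟨h, _⟩ | ⟨hf, hscc⟩
  · exact absurd h hleft
  have hXy : G.dir X (node (i + 2)) := by simpa [hf, hX, StepValid] using hq.valid (i + 1) hi
  have hi2 := hq.eq_of_node_eq_last hi (hout _ hXy)
  refine ⟨i, hi2, hX, ?_, fun hyX => hscc ⟨?_, ?_⟩⟩
  · cases h : edge i
    exacts [Or.inl rfl, absurd h hleft, Or.inr rfl]
  · rwa [hX, hout _ hXy]
  · rw [hX]
    exact .single hXy

lemma IsOpenPathSeq.update_last_bidir {X : α} (hq : G.IsOpenPathSeq C x y n node edge) {i : ℕ}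
    (hi : i + 2 = n) (hX : node (i + 1) = X) (hhead : (edge i).headAtRight) (hbi : G.bidir X y) :
    G.IsOpenPathSeq ({X} ∪ C) x y n node (Function.update edge (i + 1) .bi) := by
  have hne : ∀ l ≤ n, l ≠ i + 1 → node l ≠ X := fun l hl hli h =>
    hli (hq.injOn (Set.mem_Iic.mpr hl) (Set.mem_Iic.mpr (by omega)) (h.trans hX.symm))
  refine ⟨⟨hq.node_zero, hq.node_last, fun k hk => ?_, hq.injOn⟩, ?_, ?_, fun k hk => ?_⟩
  · by_cases hki : k = i + 1
    · subst hki
      rw [Function.update_self, hX, show i + 1 + 1 = n by omega, hq.node_last]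
      exact hbi
    · rw [Function.update_of_ne hki]
      exact hq.valid k hk
  · exact fun h => h.elim (hne 0 (by omega) (by omega) ∘ hq.node_zero.trans) hq.left_not_mem
  · exact fun h => h.elim (hne n le_rfl (by omega) ∘ hq.node_last.trans) hq.right_not_mem
  · rw [Function.update_of_ne (show k ≠ i + 1 by omega)]
    by_cases hki : k = i
    · subst hki
      rw [Function.update_self, hX]
      exact not_blocks_of_collider hhead (Or.inr rfl) (Or.inl rfl)
    · rw [Function.update_of_ne (show k + 1 ≠ i + 1 by omega)]
      exact fun h => hq.not_blocks k hk
        (blocks_of_blocks_union_singleton h (hne (k + 1) (by omega) (by omega)))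

end DMG

open DMG

theorem extended_y_structure_orientations_general
    {α : Type*} (G : DMG α) (V W X Y : α) (S : Set α)
    (hVX : V ≠ X)
    (hXY : X ≠ Y)
    (hcover : ∀ a : α, a = V ∨ a = W ∨ a = X ∨ a = Y ∨ a ∈ S)
    (h1 : G.sigmaSep V Y ({X} ∪ S))
    (h2 : ¬ G.sigmaSep V Y S)
    (h3 : ¬ G.sigmaSep V W ({X} ∪ S))
    (h4 : G.sigmaSep V W S) :
    X ∉ G.ancSet ({V, W} ∪ S) ∧
    (∀ z, z ∈ ({V, W} : Set α) ∪ S → ¬ G.dir X z) ∧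
    ¬ G.dir Y X ∧ ¬ G.bidir X Y := by
  obtain ⟨n, node, edge, hp⟩ := not_sigmaSep_iff.mp h3
  have hW := not_mem_ancSet_insert_of_open_of_sigmaSep hp h4
  have hV := not_mem_ancSet_insert_of_open_of_sigmaSep hp.reverse h4.symm
  have hA : X ∉ G.ancSet ({V, W} ∪ S) := by
    rintro ⟨z, (rfl | rfl) | hz, hXz⟩
    · exact hV ⟨_, Set.mem_insert _ _, hXz⟩
    · exact hW ⟨_, Set.mem_insert _ _, hXz⟩
    · exact hW ⟨z, Set.mem_insert_of_mem _ hz, hXz⟩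
  have hchild : ∀ z, z ∈ ({V, W} : Set α) ∪ S → ¬ G.dir X z := fun z hz hXz =>
    hA ⟨z, hz, .single hXz⟩
  have hout : ∀ z, G.dir X z → z = Y := fun z hXz => by
    rcases hcover z with h | h | h | h | h
    · exact absurd hXz (hchild z (Or.inl (Or.inl h)))
    · exact absurd hXz (hchild z (Or.inl (Or.inr h)))
    · exact absurd (h ▸ hXz) (G.dir_irrefl X)
    · exact h
    · exact absurd hXz (hchild z (Or.inr h))
  obtain ⟨m, node', edge', hq⟩ := not_sigmaSep_iff.mp h2
  obtain ⟨i, hi, hX, hhead, hYX⟩ :=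
    exists_penultimate_of_open_of_sigmaSep_union hq h1 hVX hXY.symm hout
  exact ⟨hA, hchild, fun h => hYX (.single h),
    fun hbi => not_sigmaSep_iff.mpr ⟨_, _, _, hq.update_last_bidir hi hX hhead hbi⟩ h1⟩

/-- edge orientations at `X` under the Extended Y-Structure
conditions: `X ∉ an({V, W} ∪ S)`, every edge between `X` and a node of
`{V, W} ∪ S` has an arrowhead at `X` (i.e. there is no directed edge out of `X`
into such a node), and neither `Y → X` nor `X ↔ Y` is in `G`. -/
theorem extended_y_structure_orientations
    {α : Type*} [Fintype α] (G : DMG α) (V W X Y : α) (S : Set α)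
    (hVW : V ≠ W) (hVX : V ≠ X) (hVY : V ≠ Y)
    (hWX : W ≠ X) (hWY : W ≠ Y) (hXY : X ≠ Y)
    (hVS : V ∉ S) (hWS : W ∉ S) (hXS : X ∉ S) (hYS : Y ∉ S)
    (hcover : ∀ a : α, a = V ∨ a = W ∨ a = X ∨ a = Y ∨ a ∈ S)
    (h1 : G.sigmaSep V Y ({X} ∪ S))
    (h2 : ¬ G.sigmaSep V Y S)
    (h3 : ¬ G.sigmaSep V W ({X} ∪ S))
    (h4 : G.sigmaSep V W S) :
    X ∉ G.ancSet ({V, W} ∪ S) ∧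
    (∀ z, z ∈ ({V, W} : Set α) ∪ S → ¬ G.dir X z) ∧
    ¬ G.dir Y X ∧ ¬ G.bidir X Y :=
  extended_y_structure_orientations_general G V W X Y S hVX hXY hcover h1 h2 h3 h4
end
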